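/- Let h ≠ 0 and θ ∈ ℝ be such that h²/π is irrational. Then for every t₀ ∈ ℝ, the set { {c(t₀ + 2πn/h) − ⌊a(t₀ + 2πn/h)⌋ · b(t₀ + 2πn/h)} : n ∈ ℕ } is dense in [0,1]. -/
import Mathlib


open Real

/-- Coordinate `a` of the geodesic-spiral in the Heisenberg group. -/
noncomputable def aSpiral (h θ t : ℝ) : ℝ := (Real.sin (θ + h * t) - Real.sin θ) / h

/-- Coordinate `b` of the geodesic-spiral in the Heisenberg group. -/
noncomputable def bSpiral (h θ t : ℝ) : ℝ := (Real.cos θ - Real.cos (θ + h * t)) / h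

/-- Coordinate `c` of the geodesic-spiral in the Heisenberg group. -/
noncomputable def cSpiral (h θ t : ℝ) : ℝ :=
  (h * t - Real.sin (h * t)) / (2 * h ^ 2) + aSpiral h θ t * bSpiral h θ t / 2

/-- The quotient map onto the circle of circumference 1. -/
noncomputable def qmap : ℝ →+ AddCircle (1:ℝ) :=
  QuotientAddGroup.mk' (AddSubgroup.zmultiples (1:ℝ))

lemma dense_subgroup_of_irrational {α : ℝ} (hα : Irrational α) :
    Dense ((AddSubgroup.closure ({1, α} : Set ℝ) : AddSubgroup ℝ) : Set ℝ) := by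
  rcases AddSubgroup.dense_or_cyclic (AddSubgroup.closure {1, α}) with hd | ⟨a, ha⟩
  · exact hd
  · exfalso
    have h1 : (1:ℝ) ∈ AddSubgroup.closure ({1, α} : Set ℝ) :=
      AddSubgroup.subset_closure (by simp)
    have h2 : α ∈ AddSubgroup.closure ({1, α} : Set ℝ) :=
      AddSubgroup.subset_closure (by simp)
    rw [ha, AddSubgroup.mem_closure_singleton] at h1 h2
    obtain ⟨m, hm⟩ := h1
    obtain ⟨k, hk⟩ := h2
    rw [zsmul_eq_mul] at hm hk
    have hm0 : (m:ℝ) ≠ 0 := by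
      rintro h0; rw [h0, zero_mul] at hm; exact one_ne_zero hm.symm
    apply hα
    refine ⟨(k : ℚ) / (m : ℚ), ?_⟩
    push_cast
    rw [div_eq_iff hm0, ← hk, mul_assoc, mul_comm a, hm, mul_one]

lemma denseRange_nsmul_circle {α : ℝ} (hα : Irrational α) :
    DenseRange (fun n : ℕ => n • (α : AddCircle (1:ℝ))) := by
  rw [← denseRange_zsmul_iff_nsmul]
  have hmapcl : AddSubgroup.map qmap (AddSubgroup.closure ({1, α} : Set ℝ))
      = AddSubgroup.closure (qmap '' ({1, α} : Set ℝ)) := AddMonoidHom.map_closure _ _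
  have himg : (Set.range fun n : ℤ => n • (α : AddCircle (1:ℝ)))
      = qmap '' (AddSubgroup.closure ({1, α} : Set ℝ) : Set ℝ) := by
    have himg2 : qmap '' ({1, α} : Set ℝ) = {0, (α : AddCircle (1:ℝ))} := by
      rw [Set.image_pair]
      congr 1
      show ((1:ℝ) : AddCircle (1:ℝ)) = 0
      exact (QuotientAddGroup.eq_zero_iff _).2 (AddSubgroup.mem_zmultiples 1)
    ext x
    constructor
    · rintro ⟨n, rfl⟩
      refine ⟨n • α, ?_, map_zsmul qmap n α⟩
      exact zsmul_mem (AddSubgroup.subset_closure (by simp)) n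
    · rintro ⟨r, hr, rfl⟩
      have hmem0 : qmap r ∈ AddSubgroup.closure (qmap '' ({1, α} : Set ℝ)) := by
        rw [← hmapcl]; exact ⟨r, hr, rfl⟩
      rw [himg2] at hmem0
      have hmem : qmap r ∈ AddSubgroup.zmultiples ((α : AddCircle (1:ℝ))) := by
        refine (AddSubgroup.closure_le _).2 ?_ hmem0
        rintro x (rfl | rfl)
        · exact zero_mem _
        · exact AddSubgroup.mem_zmultiples _
      rw [AddSubgroup.mem_zmultiples_iff] at hmem
      obtain ⟨n, hn⟩ := hmem
      exact ⟨n, hn⟩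
  have hc : Continuous qmap := AddCircle.continuous_mk' 1
  have hs : Function.Surjective qmap := Quotient.mk''_surjective
  have := (hs.denseRange).dense_image hc (dense_subgroup_of_irrational hα)
  rwa [← himg] at this

lemma dense_fract_orbit {α : ℝ}
    (hd : DenseRange (fun n : ℕ => n • (α : AddCircle (1:ℝ)))) (C : ℝ) :
    Set.Icc (0:ℝ) 1 ⊆ closure {x : ℝ | ∃ n : ℕ, x = Int.fract (C + n * α)} := by
  set S := {x : ℝ | ∃ n : ℕ, x = Int.fract (C + n * α)} with hS
  have key : Set.Ioo (0:ℝ) 1 ⊆ closure S := by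
    intro y hy
    rw [Metric.mem_closure_iff]
    intro δ hδ
    set ε := min δ (min y (1 - y)) with hε
    have hε0 : 0 < ε := lt_min hδ (lt_min hy.1 (by linarith [hy.2]))
    have hεy : ε ≤ y := le_trans (min_le_right _ _) (min_le_left _ _)
    have hεy' : ε ≤ 1 - y := le_trans (min_le_right _ _) (min_le_right _ _)
    have hεδ : ε ≤ δ := min_le_left _ _
    obtain ⟨n, hn⟩ := hd.exists_dist_lt (((y - C : ℝ)) : AddCircle (1:ℝ)) hε0
    set z := y - C - n * α with hz
    have hdist : |z - round z| < ε := by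
      have h1 : (((y - C : ℝ)) : AddCircle (1:ℝ)) - n • (α : AddCircle (1:ℝ))
          = ((z : ℝ) : AddCircle (1:ℝ)) := by
        have hsm : (n : ℕ) • (α : AddCircle (1:ℝ)) = (((n * α : ℝ)) : AddCircle (1:ℝ)) := by
          have := map_nsmul (QuotientAddGroup.mk' (AddSubgroup.zmultiples (1:ℝ))) n α
          rw [show ((n : ℕ) • α) = (n : ℝ) * α from by ring] at this
          exact this.symm
        rw [hsm]
        exact (map_sub (QuotientAddGroup.mk' (AddSubgroup.zmultiples (1:ℝ))) _ _).symm
      have h2 : dist (((y - C : ℝ)) : AddCircle (1:ℝ))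
          ((fun n : ℕ => n • (α : AddCircle (1:ℝ))) n) = ‖((z : ℝ) : AddCircle (1:ℝ))‖ := by
        rw [dist_eq_norm, h1]
      rw [h2, AddCircle.norm_eq] at hn
      simpa using hn
    set m := round z with hm
    set r := C + n * α + m with hr
    have hyr : |y - r| < ε := by
      have hyz : y - r = z - m := by rw [hr, hz]; ring
      rwa [hyz]
    have hr0 : 0 < r := by
      have := abs_lt.1 hyr
      linarith
    have hr1 : r < 1 := by
      have := abs_lt.1 hyr
      linarith
    have hfr : Int.fract (C + n * α) = r := by
      have hCr : (C + n * α : ℝ) = r - m := by rw [hr]; ring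
      rw [hCr, Int.fract_sub_intCast, Int.fract_eq_self.2 ⟨le_of_lt hr0, hr1⟩]
    refine ⟨Int.fract (C + n * α), ⟨n, rfl⟩, ?_⟩
    rw [hfr, Real.dist_eq]
    exact lt_of_lt_of_le hyr hεδ
  intro y hy
  have h1 : Set.Icc (0:ℝ) 1 = closure (Set.Ioo (0:ℝ) 1) := (closure_Ioo one_ne_zero.symm).symm
  rw [h1] at hy
  exact (closure_minimal key isClosed_closure) hy

lemma spiral_arg (h : ℝ) (hh : h ≠ 0) (t₀ : ℝ) (n : ℕ) :
    h * (t₀ + 2 * Real.pi * n / h) = h * t₀ + (n : ℤ) * (2 * Real.pi) := by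
  push_cast
  field_simp

lemma aSpiral_periodic (h θ : ℝ) (hh : h ≠ 0) (t₀ : ℝ) (n : ℕ) :
    aSpiral h θ (t₀ + 2 * Real.pi * n / h) = aSpiral h θ t₀ := by
  unfold aSpiral
  rw [spiral_arg h hh t₀ n, ← add_assoc, Real.sin_add_int_mul_two_pi]

lemma bSpiral_periodic (h θ : ℝ) (hh : h ≠ 0) (t₀ : ℝ) (n : ℕ) :
    bSpiral h θ (t₀ + 2 * Real.pi * n / h) = bSpiral h θ t₀ := by
  unfold bSpiral
  rw [spiral_arg h hh t₀ n, ← add_assoc, Real.cos_add_int_mul_two_pi]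

lemma cSpiral_step (h θ : ℝ) (hh : h ≠ 0) (t₀ : ℝ) (n : ℕ) :
    cSpiral h θ (t₀ + 2 * Real.pi * n / h) = cSpiral h θ t₀ + n * (Real.pi / h ^ 2) := by
  unfold cSpiral
  rw [aSpiral_periodic h θ hh t₀ n, bSpiral_periodic h θ hh t₀ n,
    spiral_arg h hh t₀ n, Real.sin_add_int_mul_two_pi]
  have h2 : (2 : ℝ) * h ^ 2 ≠ 0 := by positivity
  push_cast
  field_simp
  ring

theorem stmt6 (h θ : ℝ) (hh : h ≠ 0) (hirr : Irrational (h ^ 2 / Real.pi)) (t₀ : ℝ) :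
    Set.Icc (0:ℝ) 1 ⊆ closure {x : ℝ | ∃ n : ℕ,
      x = Int.fract (cSpiral h θ (t₀ + 2 * Real.pi * n / h) -
        (⌊aSpiral h θ (t₀ + 2 * Real.pi * n / h)⌋ : ℝ) * bSpiral h θ (t₀ + 2 * Real.pi * n / h))} := by
  set α : ℝ := Real.pi / h ^ 2 with hα
  set C : ℝ := cSpiral h θ t₀ - (⌊aSpiral h θ t₀⌋ : ℝ) * bSpiral h θ t₀ with hC
  have hαirr : Irrational α := by
    have := hirr.inv
    rwa [inv_div] at this
  have hset : {x : ℝ | ∃ n : ℕ,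
      x = Int.fract (cSpiral h θ (t₀ + 2 * Real.pi * n / h) -
        (⌊aSpiral h θ (t₀ + 2 * Real.pi * n / h)⌋ : ℝ) * bSpiral h θ (t₀ + 2 * Real.pi * n / h))}
      = {x : ℝ | ∃ n : ℕ, x = Int.fract (C + n * α)} := by
    ext x
    simp only [Set.mem_setOf_eq]
    refine exists_congr fun n => ?_
    rw [aSpiral_periodic h θ hh t₀ n, bSpiral_periodic h θ hh t₀ n, cSpiral_step h θ hh t₀ n]
    congr 1
    rw [hC, hα]
    ring
  rw [hset]
  exact dense_fract_orbit (denseRange_nsmul_circle hαirr) C
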